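/- Let n ≥ 1 and let t ∈ ℕ^n with ‖t‖₁ = k. Then l1( a^t (a^t)* ) ≤ 2^k · k!. In particular, in W_1, l1( a^k (a*)^k ) = Σ_{m=0}^{k} (k!)² / ((m!)² (k−m)!) ≤ 2^k · k!. -/

import Mathlib

open scoped ComplexOrder

noncomputable section

/-- The Weyl algebra `W_n`: a complex `*`-algebra generated by `a 1, …, a n` and their
adjoints, satisfying the canonical commutation relations, in which the normally ordered
monomials `(a*)^s a^t` form a basis (this pins the algebra down up to `*`-isomorphism). -/
structure WeylAlgebra (n : ℕ) where
  carrier : Type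
  [ring : Ring carrier]
  [alg : Algebra ℂ carrier]
  [starRing : StarRing carrier]
  [starModule : StarModule ℂ carrier]
  a : Fin n → carrier
  comm_aa : ∀ i j, a i * a j = a j * a i
  comm_ss : ∀ i j, star (a i) * star (a j) = star (a j) * star (a i)
  ccr : ∀ i j : Fin n, a i * star (a j) - star (a j) * a i = if i = j then 1 else 0
  basis : Module.Basis ((Fin n → ℕ) × (Fin n → ℕ)) ℂ carrier
  basis_eq : ∀ st : (Fin n → ℕ) × (Fin n → ℕ),
    basis st = (List.ofFn fun i => star (a i) ^ st.1 i).prod *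
               (List.ofFn fun i => (a i) ^ st.2 i).prod

attribute [instance] WeylAlgebra.ring WeylAlgebra.alg WeylAlgebra.starRing
  WeylAlgebra.starModule

namespace WeylAlgebra

variable {n : ℕ} (W : WeylAlgebra n)

/-- The monomial `a^t = ∏ i, (a i)^(t i)`. -/
def amon (t : Fin n → ℕ) : W.carrier := (List.ofFn fun i => W.a i ^ t i).prod

/-- The normally ordered monomial `(a*)^s a^t`. -/
def nmon (s t : Fin n → ℕ) : W.carrier :=
  (List.ofFn fun i => star (W.a i) ^ s i).prod * (List.ofFn fun i => W.a i ^ t i).prod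

/-- The `l₁`-norm of the coefficients of the (unique) normal form of `p`. -/
def l1 (p : W.carrier) : ℝ := (W.basis.repr p).sum fun _ c => ‖c‖

/-- The degree of `p`: the maximal `‖s‖₁ + ‖t‖₁` over monomials appearing in the normal
form of `p`. -/
def deg (p : W.carrier) : ℕ :=
  (W.basis.repr p).support.sup fun st => (∑ i, st.1 i) + (∑ i, st.2 i)

/-- `p` is a sum of squares, i.e. `p ∈ Σ²`. -/
def IsSOS (p : W.carrier) : Prop :=
  ∃ (N : ℕ) (f : Fin N → W.carrier), p = ∑ i, star (f i) * f i

/-- `p ∈ Σ²_k`: `p` is a sum of squares of elements of degree at most `k`. -/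
def IsSOSdeg (k : ℕ) (p : W.carrier) : Prop :=
  ∃ (N : ℕ) (f : Fin N → W.carrier), (∀ i, W.deg (f i) ≤ k) ∧ p = ∑ i, star (f i) * f i

/-- The element `g^r_c = ∑_{‖t‖₁ ≤ r} (n-1)!/(c^{‖t‖₁} (n+‖t‖₁-1)!) • a^t (a^t)*`. -/
def gpoly (c : ℝ) (r : ℕ) : W.carrier :=
  ∑ t ∈ (Fintype.piFinset fun _ : Fin n => Finset.range (r + 1)).filter
      (fun t => ∑ i, t i ≤ r),
    ((Nat.factorial (n - 1) : ℂ) /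
        ((c : ℂ) ^ (∑ i, t i) * (Nat.factorial (n + (∑ i, t i) - 1) : ℂ))) •
      (W.amon t * star (W.amon t))

/-- The value in `W` of a single letter (`Sum.inl i ↦ a i`, `Sum.inr i ↦ (a i)*`). -/
def letterVal : Fin n ⊕ Fin n → W.carrier
  | Sum.inl i => W.a i
  | Sum.inr i => star (W.a i)

/-- The value in `W` of a word (monomial) in the letters `a_1,…,a_n,a_1*,…,a_n*`. -/
def wordVal (w : List (Fin n ⊕ Fin n)) : W.carrier := (w.map W.letterVal).prod

end WeylAlgebra

/-- The domain of the Schrödinger representation: finitely supported functions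
`ℕ^n → ℂ`. -/
abbrev DSpace (n : ℕ) := (Fin n → ℕ) →₀ ℂ

/-- The number basis vector `e_m`. -/
def eVec {n : ℕ} (m : Fin n → ℕ) : DSpace n := Finsupp.single m 1

/-- The inner product `⟨f, g⟩ = ∑_m conj (f m) * g m` on `DSpace n`
(antilinear in the first argument). -/
def innerD {n : ℕ} (f g : DSpace n) : ℂ := f.sum fun m c => (starRingEnd ℂ) c * g m

/-- The Schrödinger (Fock) representation of the Weyl algebra `W` on `DSpace n`,
specified by its action on the number basis. -/
structure Schrodinger {n : ℕ} (W : WeylAlgebra n) where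
  rep : W.carrier →ₐ[ℂ] Module.End ℂ (DSpace n)
  rep_a : ∀ (i : Fin n) (m : Fin n → ℕ),
    rep (W.a i) (eVec m) =
      (Real.sqrt (m i) : ℂ) • eVec (Function.update m i (m i - 1))
  rep_astar : ∀ (i : Fin n) (m : Fin n → ℕ),
    rep (star (W.a i)) (eVec m) =
      (Real.sqrt (m i + 1) : ℂ) • eVec (Function.update m i (m i + 1))

namespace Schrodinger

variable {n : ℕ} {W : WeylAlgebra n} (S : Schrodinger W)

/-- `π(p) ≥ 0`: the quadratic form of `π(p)` is nonnegative on the domain. -/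
def PiNonneg (p : W.carrier) : Prop := ∀ φ : DSpace n, 0 ≤ innerD φ (S.rep p φ)

/-- The set of energies `⟨φ, π(p) φ⟩` over normalized `φ` in the domain. -/
def energySet (p : W.carrier) : Set ℝ :=
  { x | ∃ φ : DSpace n, innerD φ φ = 1 ∧ (innerD φ (S.rep p φ)).re = x }

/-- `λ_inf(p)`, the infimum of `⟨φ, π(p) φ⟩` over normalized `φ`. -/
def lambdaInf (p : W.carrier) : ℝ := sInf (S.energySet p)

end Schrodinger

/-! Distinct modes commute, so `a^t (a^t)*` is the product over `i` of the one-mode elements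
`a_i^{t_i} (a_i*)^{t_i}`, and `[a, a*] = 1` gives the one-mode normal form
`a^k (a*)^k = ∑_m C(k,m) k(k-1)⋯(k-m+1) (a*)^{k-m} a^{k-m}`. Multiplying these out, distinct
choices of the `m_i` give distinct normal monomials, so `l1` is exactly the product of the
one-mode coefficient sums (for one mode, read off at `(a*)^m a^m`, this is the explicit sum).
Each of these is at most `∑_m C(t_i,m) t_i! = 2^{t_i} t_i!`, and `∏ t_i! ≤ (∑ t_i)!`. -/

open Finset

section NormalOrdering

variable {R : Type*} [Ring R] {a b : R}

theorem mul_pow_of_mul_eq_mul_add_one (h : a * b = b * a + 1) (q : ℕ) :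
    a * b ^ q = b ^ q * a + q • b ^ (q - 1) := by
  induction q with
  | zero => simp
  | succ q ih =>
    have hq : (q • b ^ (q - 1)) * b = q • b ^ q := by
      rcases q with _ | q <;> simp [pow_succ, mul_assoc]
    rw [pow_succ, ← mul_assoc, ih, add_mul, mul_assoc, h, hq, mul_add, mul_one, ← mul_assoc,
      ← pow_succ, Nat.add_sub_cancel, succ_nsmul]
    abel

theorem pow_mul_pow_of_mul_eq_mul_add_one (h : a * b = b * a + 1) (k q : ℕ) :
    a ^ k * b ^ q =
      ∑ m ∈ range (k + 1), (k.choose m * q.descFactorial m) • (b ^ (q - m) * a ^ (k - m)) := by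
  induction k with
  | zero => simp
  | succ k ih =>
    have step : ∀ m ∈ range (k + 1), a * ((k.choose m * q.descFactorial m) •
        (b ^ (q - m) * a ^ (k - m))) =
        (k.choose m * q.descFactorial m) • (b ^ (q - m) * a ^ (k + 1 - m)) +
          (k.choose m * q.descFactorial (m + 1)) •
            (b ^ (q - (m + 1)) * a ^ (k + 1 - (m + 1))) := by
      intro m hm
      have hmk : k + 1 - m = k - m + 1 := by grind
      rw [mul_smul_comm, ← mul_assoc, mul_pow_of_mul_eq_mul_add_one h, add_mul, smul_mul_assoc,
        mul_assoc, ← pow_succ', hmk, Nat.descFactorial_succ, Nat.sub_sub, smul_add, smul_smul,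
        Nat.add_sub_add_right]
      ring_nf
    have shift : ∑ m ∈ range (k + 1),
        (k.choose m * q.descFactorial m) • (b ^ (q - m) * a ^ (k + 1 - m)) =
        ∑ m ∈ range (k + 1), (k.choose (m + 1) * q.descFactorial (m + 1)) •
          (b ^ (q - (m + 1)) * a ^ (k + 1 - (m + 1))) + b ^ q * a ^ (k + 1) := by
      calc _ = ∑ m ∈ range (k + 2),
              (k.choose m * q.descFactorial m) • (b ^ (q - m) * a ^ (k + 1 - m)) := by
            simp [sum_range_succ _ (k + 1)]
        _ = _ := by simp [sum_range_succ']
    rw [pow_succ', mul_assoc, ih, mul_sum, sum_congr rfl step, sum_add_distrib, shift,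
      sum_range_succ' _ (k + 1)]
    simp only [Nat.choose_succ_succ', add_mul, add_nsmul, sum_add_distrib, Nat.choose_zero_right,
      Nat.descFactorial_zero, mul_one, one_smul, Nat.sub_zero]
    abel

end NormalOrdering

namespace List

theorem prod_ofFn_mul_prod_ofFn {M : Type*} [Monoid M] {n : ℕ} (x y : Fin n → M)
    (h : ∀ i j, i ≠ j → Commute (x i) (y j)) :
    (ofFn x).prod * (ofFn y).prod = (ofFn fun i => x i * y i).prod := by
  induction n with
  | zero => simp
  | succ n ih =>
    have hy : Commute (ofFn fun i => x i.succ).prod (y 0) :=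
      Commute.list_prod_left _ _ fun z hz => by
        obtain ⟨i, rfl⟩ := mem_ofFn.mp hz
        exact h _ _ (Fin.succ_ne_zero i)
    simp only [ofFn_succ, prod_cons]
    rw [← ih _ _ fun i j hij => h _ _ (Fin.succ_injective _ |>.ne hij), mul_assoc, mul_assoc,
      ← mul_assoc _ (y 0), hy.eq, mul_assoc]

theorem star_prod_ofFn {M : Type*} [Monoid M] [StarMul M] {n : ℕ} (x : Fin n → M)
    (h : ∀ i j, Commute (x i) (x j)) :
    star (ofFn x).prod = (ofFn fun i => star (x i)).prod := by
  induction n with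
  | zero => simp
  | succ n ih =>
    simp only [ofFn_succ, prod_cons, star_mul, ih _ fun i j => h _ _]
    exact (Commute.list_prod_left _ _ fun z hz => by
      obtain ⟨i, rfl⟩ := mem_ofFn.mp hz
      exact (h _ _).star_star).eq

theorem prod_ofFn_smul {R M : Type*} [CommMonoid R] [Monoid M] [MulAction R M]
    [IsScalarTower R M M] [SMulCommClass R M M] {n : ℕ} (c : Fin n → R) (x : Fin n → M) :
    (ofFn fun i => c i • x i).prod = (∏ i, c i) • (ofFn x).prod := by
  induction n with
  | zero => simp
  | succ n ih => simp only [ofFn_succ, prod_cons, ih, Fin.prod_univ_succ, smul_mul_smul_comm]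

theorem prod_ofFn_sum {R ι : Type*} [Semiring R] {n : ℕ} (s : Fin n → Finset ι)
    (f : Fin n → ι → R) :
    (ofFn fun i => ∑ j ∈ s i, f i j).prod =
      ∑ p ∈ Fintype.piFinset s, (ofFn fun i => f i (p i)).prod := by
  induction n with
  | zero => simp
  | succ n ih =>
    rw [ofFn_succ, prod_cons, ih, sum_mul_sum, ← sum_product']
    refine sum_equiv (Fin.consEquiv fun _ => ι) (fun p => ?_) (fun p _ => ?_)
    · simp [Fin.forall_fin_succ]
    · simp

end List

open Nat in
theorem Nat.sum_choose_mul_descFactorial_le (k : ℕ) :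
    ∑ m ∈ range (k + 1), k.choose m * k.descFactorial m ≤ 2 ^ k * k ! :=
  calc ∑ m ∈ range (k + 1), k.choose m * k.descFactorial m
      ≤ ∑ m ∈ range (k + 1), k.choose m * k ! := by
        refine sum_le_sum fun m hm => Nat.mul_le_mul_left _ ?_
        rw [← factorial_mul_descFactorial (Nat.lt_succ_iff.mp (mem_range.mp hm))]
        exact Nat.le_mul_of_pos_left _ (factorial_pos _)
    _ = 2 ^ k * k ! := by rw [← sum_mul, sum_range_choose]

open Nat in
theorem Nat.sum_choose_mul_descFactorial_eq_sum_div (k : ℕ) :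
    ∑ m ∈ range (k + 1), ((k.choose m * k.descFactorial m : ℕ) : ℝ) =
      ∑ m ∈ range (k + 1), (k ! : ℝ) ^ 2 / ((m ! : ℝ) ^ 2 * ((k - m)! : ℝ)) := by
  rw [← sum_range_reflect]
  refine sum_congr rfl fun m hm => ?_
  have hm : m ≤ k := Nat.lt_succ_iff.mp (mem_range.mp hm)
  have hchoose : (k.choose m * m ! * (k - m)! : ℝ) = k ! := by
    exact_mod_cast choose_mul_factorial_mul_factorial hm
  have hdesc : (m ! * k.descFactorial (k - m) : ℝ) = k ! := by
    have h := factorial_mul_descFactorial (Nat.sub_le k m)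
    rw [Nat.sub_sub_self hm] at h
    exact_mod_cast h
  rw [Nat.add_sub_cancel, choose_symm hm, eq_div_iff (by positivity)]
  push_cast
  linear_combination (m ! * k.descFactorial (k - m) : ℝ) * hchoose + (k ! : ℝ) * hdesc

open Nat in
theorem Nat.prod_sum_choose_mul_descFactorial_le {ι : Type*} (s : Finset ι) (t : ι → ℕ) :
    ∏ i ∈ s, ∑ m ∈ range (t i + 1), (t i).choose m * (t i).descFactorial m ≤
      2 ^ (∑ i ∈ s, t i) * (∑ i ∈ s, t i)! :=
  calc ∏ i ∈ s, ∑ m ∈ range (t i + 1), (t i).choose m * (t i).descFactorial m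
      ≤ ∏ i ∈ s, 2 ^ t i * (t i)! := prod_le_prod' fun i _ => sum_choose_mul_descFactorial_le _
    _ = 2 ^ (∑ i ∈ s, t i) * ∏ i ∈ s, (t i)! := by rw [prod_mul_distrib, prod_pow_eq_pow_sum]
    _ ≤ 2 ^ (∑ i ∈ s, t i) * (∑ i ∈ s, t i)! :=
      Nat.mul_le_mul_left _ (le_of_dvd (factorial_pos _) (prod_factorial_dvd_factorial_sum _ _))

namespace WeylAlgebra

variable {n : ℕ} (W : WeylAlgebra n)

theorem a_mul_star_a (i : Fin n) : W.a i * star (W.a i) = star (W.a i) * W.a i + 1 := by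
  simpa [sub_eq_iff_eq_add'] using W.ccr i i

theorem commute_a_star_a {i j : Fin n} (h : i ≠ j) : Commute (W.a i) (star (W.a j)) :=
  sub_eq_zero.mp (by simpa [h] using W.ccr i j)

theorem basis_diag_eq_prod (e : Fin n → ℕ) :
    W.basis (e, e) = (List.ofFn fun i => star (W.a i) ^ e i * W.a i ^ e i).prod := by
  rw [W.basis_eq, List.prod_ofFn_mul_prod_ofFn]
  exact fun i j hij => ((W.commute_a_star_a hij.symm).pow_pow _ _).symm

theorem amon_mul_star_amon (t : Fin n → ℕ) :
    W.amon t * star (W.amon t) =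
      (List.ofFn fun i => W.a i ^ t i * star (W.a i) ^ t i).prod := by
  rw [amon, List.star_prod_ofFn _ fun i j => Commute.pow_pow (W.comm_aa i j) _ _]
  simp only [star_pow]
  exact List.prod_ofFn_mul_prod_ofFn _ _ fun i j hij => (W.commute_a_star_a hij).pow_pow _ _

theorem pow_mul_star_pow (i : Fin n) (k : ℕ) :
    W.a i ^ k * star (W.a i) ^ k =
      ∑ m ∈ range (k + 1), ((k.choose m * k.descFactorial m : ℕ) : ℂ) •
        (star (W.a i) ^ (k - m) * W.a i ^ (k - m)) := by
  simp only [Nat.cast_smul_eq_nsmul]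
  exact pow_mul_pow_of_mul_eq_mul_add_one (W.a_mul_star_a i) k k

theorem amon_mul_star_amon_eq_sum (t : Fin n → ℕ) :
    W.amon t * star (W.amon t) =
      ∑ p ∈ Fintype.piFinset fun i => range (t i + 1),
        ((∏ i, (t i).choose (p i) * (t i).descFactorial (p i) : ℕ) : ℂ) •
          W.basis (fun i => t i - p i, fun i => t i - p i) := by
  simp only [amon_mul_star_amon, pow_mul_star_pow, List.prod_ofFn_sum, List.prod_ofFn_smul,
    basis_diag_eq_prod, Nat.cast_prod]

theorem l1_sum_smul_basis {ι : Type*} (s : Finset ι) (c : ι → ℂ)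
    (x : ι → (Fin n → ℕ) × (Fin n → ℕ)) (hx : Set.InjOn x s) :
    W.l1 (∑ j ∈ s, c j • W.basis (x j)) = ∑ j ∈ s, ‖c j‖ := by
  classical
  have hrepr : W.basis.repr (∑ j ∈ s, c j • W.basis (x j)) =
      ∑ j ∈ s, Finsupp.single (x j) (c j) := by
    simp
  have hsupp : (W.basis.repr (∑ j ∈ s, c j • W.basis (x j))).support ⊆ s.image x := by
    rw [hrepr]
    refine Finsupp.support_finsetSum.trans fun y hy => ?_
    obtain ⟨j, hj, hy⟩ := mem_biUnion.mp hy
    exact mem_image.mpr ⟨j, hj, (Finset.mem_singleton.mp (Finsupp.support_single_subset hy)).symm⟩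
  rw [l1, Finsupp.sum_of_support_subset _ hsupp _ (by simp), sum_image hx]
  refine sum_congr rfl fun j hj => ?_
  rw [hrepr, Finsupp.finsetSum_apply, sum_eq_single_of_mem j hj]
  · simp
  · intro i hi hij
    simp [hx.ne hi hj hij]

theorem l1_amon_mul_star_amon (t : Fin n → ℕ) :
    W.l1 (W.amon t * star (W.amon t)) =
      ((∏ i, ∑ m ∈ range (t i + 1), (t i).choose m * (t i).descFactorial m : ℕ) : ℝ) := by
  classical
  rw [amon_mul_star_amon_eq_sum, l1_sum_smul_basis, prod_univ_sum]
  · simp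
  · intro p hp q hq hpq
    funext i
    have hpi := mem_range.mp (Fintype.mem_piFinset.mp hp i)
    have hqi := mem_range.mp (Fintype.mem_piFinset.mp hq i)
    have hsub : t i - p i = t i - q i := congrFun (congrArg Prod.fst hpq) i
    omega

end WeylAlgebra

theorem l1_antinormal_bound_general {n : ℕ} (W : WeylAlgebra n)
    (t : Fin n → ℕ) (k : ℕ) (ht : ∑ i, t i = k) :
    W.l1 (W.amon t * star (W.amon t)) ≤ 2 ^ k * Nat.factorial k ∧
    ∀ W1 : WeylAlgebra 1,
      W1.l1 (W1.a 0 ^ k * star (W1.a 0) ^ k) =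
        (∑ m ∈ Finset.range (k + 1),
          (Nat.factorial k : ℝ) ^ 2 /
            ((Nat.factorial m : ℝ) ^ 2 * (Nat.factorial (k - m) : ℝ))) ∧
      (∑ m ∈ Finset.range (k + 1),
          (Nat.factorial k : ℝ) ^ 2 /
            ((Nat.factorial m : ℝ) ^ 2 * (Nat.factorial (k - m) : ℝ))) ≤
        2 ^ k * Nat.factorial k := by
  refine ⟨?_, fun W1 => ⟨?_, ?_⟩⟩
  · rw [W.l1_amon_mul_star_amon, ← ht]
    exact_mod_cast Nat.prod_sum_choose_mul_descFactorial_le univ t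
  · have hW1 : W1.a 0 ^ k * star (W1.a 0) ^ k =
        W1.amon (fun _ => k) * star (W1.amon fun _ => k) := by
      simp [WeylAlgebra.amon]
    rw [hW1, W1.l1_amon_mul_star_amon, Fin.prod_univ_one, Nat.cast_sum,
      Nat.sum_choose_mul_descFactorial_eq_sum_div]
  · rw [← Nat.sum_choose_mul_descFactorial_eq_sum_div]
    exact_mod_cast Nat.sum_choose_mul_descFactorial_le k

/-- For `t ∈ ℕ^n` with `‖t‖₁ = k`, `l1(a^t (a^t)*) ≤ 2^k·k!`;
in particular, in `W₁`, `l1(a^k (a*)^k) = ∑_{m=0}^{k} (k!)²/((m!)²(k-m)!) ≤ 2^k·k!`. -/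
theorem l1_antinormal_bound {n : ℕ} (hn : 1 ≤ n) (W : WeylAlgebra n)
    (t : Fin n → ℕ) (k : ℕ) (ht : ∑ i, t i = k) :
    W.l1 (W.amon t * star (W.amon t)) ≤ 2 ^ k * Nat.factorial k ∧
    ∀ W1 : WeylAlgebra 1,
      W1.l1 (W1.a 0 ^ k * star (W1.a 0) ^ k) =
        (∑ m ∈ Finset.range (k + 1),
          (Nat.factorial k : ℝ) ^ 2 /
            ((Nat.factorial m : ℝ) ^ 2 * (Nat.factorial (k - m) : ℝ))) ∧
      (∑ m ∈ Finset.range (k + 1),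
          (Nat.factorial k : ℝ) ^ 2 /
            ((Nat.factorial m : ℝ) ^ 2 * (Nat.factorial (k - m) : ℝ))) ≤
        2 ^ k * Nat.factorial k :=
  l1_antinormal_bound_general W t k ht
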